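/- Any two disjoint maximal commuting Pauli classes C₁ and C₂ in dimension d = 4 can be extended to a complete set: there exist maximal commuting Pauli classes C₃, C₄, C₅ such that {C₁, C₂, C₃, C₄, C₅} is a family of five pairwise disjoint maximal commuting Pauli classes, and hence every non-identity two-qubit Pauli operator is equal up to phase to a member of exactly one of these five classes. -/

import Mathlib

open Matrix

noncomputable section

/-- Matrices on the Hilbert space of `n` qubits, with rows and columns indexed by
bit strings `Fin n → Fin 2`. -/
abbrev QMat (n : ℕ) := Matrix (Fin n → Fin 2) (Fin n → Fin 2) ℂ

/-- The single-qubit identity. -/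
def pI : Matrix (Fin 2) (Fin 2) ℂ := 1

/-- The single-qubit Pauli X. -/
def pX : Matrix (Fin 2) (Fin 2) ℂ := !![0, 1; 1, 0]

/-- The single-qubit Pauli Y. -/
def pY : Matrix (Fin 2) (Fin 2) ℂ := !![0, -Complex.I; Complex.I, 0]

/-- The single-qubit Pauli Z. -/
def pZ : Matrix (Fin 2) (Fin 2) ℂ := !![1, 0; 0, -1]

/-- The `n`-fold Kronecker product `W 0 ⊗ ⋯ ⊗ W (n-1)`, realized on indices
`Fin n → Fin 2`. -/
def kron (n : ℕ) (W : Fin n → Matrix (Fin 2) (Fin 2) ℂ) : QMat n :=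
  fun v w => ∏ j, W j (v j) (w j)

/-- `M` is an `n`-qubit Pauli operator: an `n`-fold Kronecker product of matrices
from `{I₂, X, Y, Z}`. -/
def IsPauliOp (n : ℕ) (M : QMat n) : Prop :=
  ∃ W : Fin n → Matrix (Fin 2) (Fin 2) ℂ,
    (∀ j, W j = pI ∨ W j = pX ∨ W j = pY ∨ W j = pZ) ∧ M = kron n W

/-- Two matrices are equal up to phase if one is a nonzero scalar multiple of the other. -/
def PhaseEq {m : Type*} (A B : Matrix m m ℂ) : Prop := ∃ c : ℂ, c ≠ 0 ∧ A = c • B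

/-- A maximal commuting Pauli class in dimension `d = 2 ^ n`: a set of `d - 1`
pairwise commuting non-identity `n`-qubit Pauli operators, pairwise distinct up to phase. -/
def IsMaxClass (n : ℕ) (C : Set (QMat n)) : Prop :=
  C.Finite ∧ C.ncard = 2 ^ n - 1 ∧
  (∀ U ∈ C, IsPauliOp n U ∧ U ≠ 1) ∧
  (∀ U ∈ C, ∀ V ∈ C, U * V = V * U) ∧
  (∀ U ∈ C, ∀ V ∈ C, U ≠ V → ¬ PhaseEq U V)

/-- Two classes are disjoint if no member of one is equal up to phase to a member of the other. -/
def ClassDisjoint {n : ℕ} (C D : Set (QMat n)) : Prop :=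
  ∀ U ∈ C, ∀ V ∈ D, ¬ PhaseEq U V

/-- Two classes are equal up to phase (as sets of operators). -/
def ClassPhaseEq {n : ℕ} (C D : Set (QMat n)) : Prop :=
  (∀ U ∈ C, ∃ V ∈ D, PhaseEq U V) ∧ (∀ V ∈ D, ∃ U ∈ C, PhaseEq U V)

/-- The standard Hermitian inner product on `ι → ℂ` (conjugate-linear in the first slot). -/
def cinner {ι : Type*} [Fintype ι] (x y : ι → ℂ) : ℂ :=
  ∑ k, (starRingEnd ℂ) (x k) * y k

/-!
Label an `n`-qubit Pauli operator by `p : Fin n → Fin 4`. Trace orthogonality of the Pauli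
matrices shows that distinct labels give operators that are distinct up to phase, and two
operators commute iff their factors anticommute in an even number of positions. For two qubits,
maximal commuting classes thus become the 15 lines of the symplectic quadrangle `W(2)` on the 15
non-identity labels, disjoint classes become disjoint lines, and complete sets become spreads.
An exhaustive check shows that any two disjoint lines lie in one of the six spreads.
-/

/-- The label `a : Fin 4` stands for `I₂, X, Y, Z` in this order. -/
def pauli : Fin 4 → Matrix (Fin 2) (Fin 2) ℂ := ![pI, pX, pY, pZ]

def pauliOp {n : ℕ} (p : Fin n → Fin 4) : QMat n := kron n fun j => pauli (p j)

def pauliSign (a b : Fin 4) : ℤˣ := if a = 0 ∨ b = 0 ∨ a = b then 1 else -1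

def PauliCommute {n : ℕ} (p q : Fin n → Fin 4) : Prop := ∏ j, pauliSign (p j) (q j) = 1

instance {n : ℕ} (p q : Fin n → Fin 4) : Decidable (PauliCommute p q) :=
  inferInstanceAs (Decidable (_ = _))

section Kron

variable {n : ℕ}

theorem kron_mul (V W : Fin n → Matrix (Fin 2) (Fin 2) ℂ) :
    kron n V * kron n W = kron n fun j => V j * W j := by
  ext v w
  simp only [kron, mul_apply, Finset.prod_univ_sum, Fintype.piFinset_univ, Finset.prod_mul_distrib]

theorem kron_smul (c : Fin n → ℂ) (W : Fin n → Matrix (Fin 2) (Fin 2) ℂ) :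
    kron n (fun j => c j • W j) = (∏ j, c j) • kron n W := by
  ext v w
  simp only [kron, Matrix.smul_apply, smul_eq_mul, Finset.prod_mul_distrib]

theorem kron_one : kron n (fun _ => 1) = 1 := by
  ext v w
  simp only [kron, one_apply, Finset.prod_boole, funext_iff, Finset.mem_univ, true_implies]

theorem trace_kron (W : Fin n → Matrix (Fin 2) (Fin 2) ℂ) :
    trace (kron n W) = ∏ j, trace (W j) := by
  simp only [trace, diag, kron, Finset.prod_univ_sum, Fintype.piFinset_univ]

end Kron

theorem pauli_mem (a : Fin 4) :
    pauli a = pI ∨ pauli a = pX ∨ pauli a = pY ∨ pauli a = pZ := by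
  fin_cases a <;> simp [pauli]

theorem pauli_mul_self (a : Fin 4) : pauli a * pauli a = 1 := by
  fin_cases a <;> ext i j <;> fin_cases i <;> fin_cases j <;>
    simp [pauli, pI, pX, pY, pZ, mul_apply, Fin.sum_univ_two]

theorem trace_pauli_mul (a b : Fin 4) : trace (pauli a * pauli b) = if a = b then 2 else 0 := by
  fin_cases a <;> fin_cases b <;>
    simp [pauli, pI, pX, pY, pZ, trace_fin_two, one_add_one_eq_two]

theorem pauli_mul_comm (a b : Fin 4) :
    pauli a * pauli b = ((pauliSign a b : ℤ) : ℂ) • (pauli b * pauli a) := by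
  fin_cases a <;> fin_cases b <;> ext i j <;> fin_cases i <;> fin_cases j <;>
    simp [pauli, pauliSign, pI, pX, pY, pZ, mul_apply, Fin.sum_univ_two]

theorem phaseEq_refl {m : Type*} (A : Matrix m m ℂ) : PhaseEq A A :=
  ⟨1, one_ne_zero, (one_smul ℂ A).symm⟩

section PauliOp

variable {n : ℕ}

theorem isPauliOp_iff {M : QMat n} : IsPauliOp n M ↔ ∃ p : Fin n → Fin 4, M = pauliOp p := by
  constructor
  · rintro ⟨W, hW, rfl⟩
    have hlabel (j : Fin n) : ∃ a, pauli a = W j := by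
      rcases hW j with h | h | h | h
      exacts [⟨0, h.symm⟩, ⟨1, h.symm⟩, ⟨2, h.symm⟩, ⟨3, h.symm⟩]
    choose p hp using hlabel
    exact ⟨p, by simp only [pauliOp, hp]⟩
  · rintro ⟨p, rfl⟩
    exact ⟨_, fun j => pauli_mem (p j), rfl⟩

theorem pauliOp_zero : pauliOp (0 : Fin n → Fin 4) = 1 := kron_one

theorem pauliOp_mul_self (p : Fin n → Fin 4) : pauliOp p * pauliOp p = 1 := by
  simp only [pauliOp, kron_mul, pauli_mul_self, kron_one]

theorem trace_pauliOp_mul (p q : Fin n → Fin 4) :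
    trace (pauliOp p * pauliOp q) = if p = q then 2 ^ n else 0 := by
  simp only [pauliOp, kron_mul, trace_kron, trace_pauli_mul, Fintype.prod_ite_zero, funext_iff,
    Finset.prod_const, Finset.card_univ, Fintype.card_fin]

theorem pauliOp_mul_comm (p q : Fin n → Fin 4) :
    pauliOp p * pauliOp q =
      (((∏ j, pauliSign (p j) (q j) : ℤˣ) : ℤ) : ℂ) • (pauliOp q * pauliOp p) := by
  simp only [pauliOp, kron_mul, Units.coe_prod, Int.cast_prod, ← kron_smul, ← pauli_mul_comm]

theorem commute_pauliOp_iff {p q : Fin n → Fin 4} :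
    Commute (pauliOp p) (pauliOp q) ↔ PauliCommute p q := by
  have hinv : pauliOp p * pauliOp q * (pauliOp q * pauliOp p) = 1 := by
    rw [mul_assoc, ← mul_assoc (pauliOp q), pauliOp_mul_self, one_mul, pauliOp_mul_self]
  have hne : pauliOp p * pauliOp q ≠ 0 := left_ne_zero_of_mul_eq_one hinv
  have hmul := pauliOp_mul_comm p q
  unfold Commute SemiconjBy PauliCommute
  rcases Int.units_eq_one_or (∏ j, pauliSign (p j) (q j)) with h | h
  · simpa [h] using hmul
  · simp only [h, Units.val_neg, Units.val_one, Int.cast_neg, Int.cast_one, neg_smul, one_smul]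
      at hmul
    rw [h]
    refine ⟨fun hc => ?_, fun h' => absurd h' (by decide)⟩
    rw [← hc, eq_neg_iff_add_eq_zero, ← two_smul ℂ, smul_eq_zero] at hmul
    exact absurd hmul (by simpa using hne)

theorem eq_of_phaseEq_pauliOp {p q : Fin n → Fin 4} (h : PhaseEq (pauliOp p) (pauliOp q)) :
    p = q := by
  obtain ⟨c, hc, hpq⟩ := h
  by_contra hne
  have htrace := trace_pauliOp_mul p q
  rw [hpq, smul_mul, trace_smul, trace_pauliOp_mul, if_pos rfl, if_neg hne, smul_eq_mul] at htrace
  exact hc (by simpa using htrace)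

theorem pauliOp_injective : Function.Injective (pauliOp (n := n)) :=
  fun _ _ h => eq_of_phaseEq_pauliOp ⟨1, one_ne_zero, by rw [h, one_smul]⟩

theorem pauliOp_eq_one_iff {p : Fin n → Fin 4} : pauliOp p = 1 ↔ p = 0 := by
  rw [← pauliOp_zero, pauliOp_injective.eq_iff]

end PauliOp

def line : Fin 15 → Finset (Fin 2 → Fin 4) := ![
  {![0, 1], ![1, 0], ![1, 1]}, {![0, 1], ![2, 0], ![2, 1]}, {![0, 1], ![3, 0], ![3, 1]},
  {![0, 2], ![1, 0], ![1, 2]}, {![0, 2], ![2, 0], ![2, 2]}, {![0, 2], ![3, 0], ![3, 2]},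
  {![0, 3], ![1, 0], ![1, 3]}, {![0, 3], ![2, 0], ![2, 3]}, {![0, 3], ![3, 0], ![3, 3]},
  {![1, 1], ![2, 2], ![3, 3]}, {![1, 1], ![2, 3], ![3, 2]}, {![1, 2], ![2, 1], ![3, 3]},
  {![1, 2], ![2, 3], ![3, 1]}, {![1, 3], ![2, 1], ![3, 2]}, {![1, 3], ![2, 2], ![3, 1]}]

def spread : Fin 6 → Finset (Fin 15) :=
  ![{0, 4, 8, 12, 13}, {0, 5, 7, 11, 14}, {1, 3, 8, 10, 14}, {1, 5, 6, 9, 12}, {2, 3, 7, 9, 13},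
    {2, 4, 6, 10, 11}]

theorem card_line (i : Fin 15) : (line i).card = 3 := by
  revert i; decide

theorem zero_notMem_line (i : Fin 15) : 0 ∉ line i := by
  revert i; decide

theorem pauliCommute_of_mem_line {i : Fin 15} {p q : Fin 2 → Fin 4} (hp : p ∈ line i)
    (hq : q ∈ line i) : PauliCommute p q := by
  revert i p q; decide

theorem exists_line_of_pauliCommute {p q : Fin 2 → Fin 4} (hp : p ≠ 0) (hq : q ≠ 0)
    (hpq : p ≠ q) (h : PauliCommute p q) :
    ∃ i, ∀ r, r ≠ 0 → PauliCommute p r → PauliCommute q r → r ∈ line i := by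
  revert p q; decide

theorem card_spread (s : Fin 6) : (spread s).card = 5 := by
  revert s; decide

theorem disjoint_line_of_mem_spread {s : Fin 6} {i j : Fin 15} (hi : i ∈ spread s)
    (hj : j ∈ spread s) (hij : i ≠ j) : Disjoint (line i) (line j) := by
  revert s i j; decide

theorem exists_mem_spread_of_ne_zero (s : Fin 6) {p : Fin 2 → Fin 4} (hp : p ≠ 0) :
    ∃ i ∈ spread s, p ∈ line i := by
  revert s p; decide

theorem exists_spread_of_disjoint {i j : Fin 15} (h : Disjoint (line i) (line j)) :
    ∃ s, i ∈ spread s ∧ j ∈ spread s := by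
  revert i j; decide

def lineClass (i : Fin 15) : Set (QMat 2) := pauliOp '' (line i : Set (Fin 2 → Fin 4))

theorem finite_lineClass (i : Fin 15) : (lineClass i).Finite :=
  (line i).finite_toSet.image _

theorem ncard_lineClass (i : Fin 15) : (lineClass i).ncard = 3 := by
  rw [lineClass, Set.ncard_image_of_injective _ pauliOp_injective, Set.ncard_coe_finset,
    card_line]

theorem isMaxClass_lineClass (i : Fin 15) : IsMaxClass 2 (lineClass i) := by
  refine ⟨finite_lineClass i, ncard_lineClass i, ?_, ?_, ?_⟩
  · rintro _ ⟨p, hp, rfl⟩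
    refine ⟨isPauliOp_iff.2 ⟨p, rfl⟩, fun h => zero_notMem_line i ?_⟩
    rwa [← pauliOp_eq_one_iff.1 h]
  · rintro _ ⟨p, hp, rfl⟩ _ ⟨q, hq, rfl⟩
    exact commute_pauliOp_iff.2 (pauliCommute_of_mem_line hp hq)
  · rintro _ ⟨p, -, rfl⟩ _ ⟨q, -, rfl⟩ hne hpq
    exact hne (congrArg pauliOp (eq_of_phaseEq_pauliOp hpq))

theorem exists_phaseEq_mem_lineClass_iff {i : Fin 15} {p : Fin 2 → Fin 4} :
    (∃ V ∈ lineClass i, PhaseEq (pauliOp p) V) ↔ p ∈ line i := by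
  constructor
  · rintro ⟨_, ⟨q, hq, rfl⟩, hpq⟩
    rwa [eq_of_phaseEq_pauliOp hpq]
  · exact fun hp => ⟨pauliOp p, ⟨p, hp, rfl⟩, phaseEq_refl _⟩

theorem classDisjoint_lineClass_iff {i j : Fin 15} :
    ClassDisjoint (lineClass i) (lineClass j) ↔ Disjoint (line i) (line j) := by
  simp only [ClassDisjoint, lineClass, Set.forall_mem_image, Finset.mem_coe,
    Finset.disjoint_left]
  exact ⟨fun h p hpi hpj => h hpi hpj (phaseEq_refl _),
    fun h p hpi q hqj hpq => h hpi (eq_of_phaseEq_pauliOp hpq ▸ hqj)⟩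

theorem IsMaxClass.exists_eq_pauliOp {n : ℕ} {C : Set (QMat n)} (hC : IsMaxClass n C)
    {U : QMat n} (hU : U ∈ C) : ∃ p ≠ 0, U = pauliOp p := by
  obtain ⟨p, rfl⟩ := isPauliOp_iff.1 (hC.2.2.1 U hU).1
  exact ⟨p, fun h => (hC.2.2.1 _ hU).2 (pauliOp_eq_one_iff.2 h), rfl⟩

theorem IsMaxClass.exists_eq_lineClass {C : Set (QMat 2)} (hC : IsMaxClass 2 C) :
    ∃ i, C = lineClass i := by
  obtain ⟨U, V, hU, hV, hUV⟩ := (Set.one_lt_ncard_iff hC.1).1 (by rw [hC.2.1]; norm_num)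
  obtain ⟨p, hp, rfl⟩ := hC.exists_eq_pauliOp hU
  obtain ⟨q, hq, rfl⟩ := hC.exists_eq_pauliOp hV
  obtain ⟨i, hi⟩ := exists_line_of_pauliCommute hp hq (fun h => hUV (h ▸ rfl))
    (commute_pauliOp_iff.1 (hC.2.2.2.1 _ hU _ hV))
  refine ⟨i, Set.eq_of_subset_of_ncard_le ?_ (by rw [hC.2.1, ncard_lineClass]; norm_num)
    (finite_lineClass i)⟩
  intro W hW
  obtain ⟨r, hr, rfl⟩ := hC.exists_eq_pauliOp hW
  exact ⟨r, hi r hr (commute_pauliOp_iff.1 (hC.2.2.2.1 _ hU _ hW))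
    (commute_pauliOp_iff.1 (hC.2.2.2.1 _ hV _ hW)), rfl⟩

theorem exists_image_eq_spread_of_disjoint {i j : Fin 15} (h : Disjoint (line i) (line j)) :
    ∃ k l m : Fin 15, ∃ s, Finset.univ.image ![i, j, k, l, m] = spread s := by
  obtain ⟨s, hi, hj⟩ := exists_spread_of_disjoint h
  have hij : i ≠ j := by
    rintro rfl
    simpa [card_line] using congrArg Finset.card (Finset.disjoint_self_iff_empty _ |>.1 h)
  have hj' : j ∈ (spread s).erase i := Finset.mem_erase.2 ⟨hij.symm, hj⟩
  have hcard : (((spread s).erase i).erase j).card = 3 := by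
    rw [Finset.card_erase_of_mem hj', Finset.card_erase_of_mem hi, card_spread]
  obtain ⟨k, l, m, -, -, -, hklm⟩ := Finset.card_eq_three.1 hcard
  refine ⟨k, l, m, s, ?_⟩
  rw [← Finset.insert_erase hi, ← Finset.insert_erase hj', hklm]
  ext t
  simp [Fin.exists_fin_succ, eq_comm]

theorem complete_of_image_eq_spread {s : Fin 6} {f : Fin 5 → Fin 15}
    (hf : Finset.univ.image f = spread s) :
    (∀ k, IsMaxClass 2 (lineClass (f k))) ∧
    (∀ k l, k ≠ l → ClassDisjoint (lineClass (f k)) (lineClass (f l))) ∧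
    (∀ M : QMat 2, IsPauliOp 2 M → M ≠ 1 →
      ∃! k, ∃ V ∈ lineClass (f k), PhaseEq M V) := by
  have hmem (k : Fin 5) : f k ∈ spread s := hf ▸ Finset.mem_image_of_mem f (Finset.mem_univ k)
  have hinj : Function.Injective f := by
    rw [← Set.injOn_univ, ← Finset.coe_univ, ← Finset.card_image_iff, hf, card_spread]; rfl
  have hdisj {k l : Fin 5} (hkl : k ≠ l) : Disjoint (line (f k)) (line (f l)) :=
    disjoint_line_of_mem_spread (hmem k) (hmem l) (hinj.ne hkl)
  refine ⟨fun k => isMaxClass_lineClass _,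
    fun k l hkl => classDisjoint_lineClass_iff.2 (hdisj hkl), ?_⟩
  intro M hM hM1
  obtain ⟨p, rfl⟩ := isPauliOp_iff.1 hM
  obtain ⟨i, hi, hpi⟩ := exists_mem_spread_of_ne_zero s (mt pauliOp_eq_one_iff.2 hM1)
  obtain ⟨k, -, rfl⟩ := Finset.mem_image.1 (hf ▸ hi)
  simp only [exists_phaseEq_mem_lineClass_iff]
  exact ⟨k, hpi, fun l hpl => by_contra fun hlk => Finset.disjoint_left.1 (hdisj hlk) hpl hpi⟩

/-- Any two disjoint maximal commuting Pauli classes in `d = 4` extend to a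
complete set of five pairwise disjoint maximal commuting Pauli classes, and then every
non-identity two-qubit Pauli operator is equal up to phase to a member of exactly one of
the five classes. -/
theorem extend_two_to_complete_d4 (C₁ C₂ : Set (QMat 2))
    (h1 : IsMaxClass 2 C₁) (h2 : IsMaxClass 2 C₂) (hd : ClassDisjoint C₁ C₂) :
    ∃ C₃ C₄ C₅ : Set (QMat 2),
      (∀ k, IsMaxClass 2 (![C₁, C₂, C₃, C₄, C₅] k)) ∧
      (∀ k l, k ≠ l → ClassDisjoint (![C₁, C₂, C₃, C₄, C₅] k) (![C₁, C₂, C₃, C₄, C₅] l)) ∧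
      (∀ M : QMat 2, IsPauliOp 2 M → M ≠ 1 →
        ∃! k : Fin 5, ∃ V ∈ ![C₁, C₂, C₃, C₄, C₅] k, PhaseEq M V) := by
  obtain ⟨i, rfl⟩ := h1.exists_eq_lineClass
  obtain ⟨j, rfl⟩ := h2.exists_eq_lineClass
  obtain ⟨k, l, m, s, hs⟩ :=
    exists_image_eq_spread_of_disjoint (classDisjoint_lineClass_iff.1 hd)
  have hfamily : ![lineClass i, lineClass j, lineClass k, lineClass l, lineClass m] =
      fun t => lineClass (![i, j, k, l, m] t) := by
    funext t; fin_cases t <;> rfl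
  refine ⟨lineClass k, lineClass l, lineClass m, ?_⟩
  rw [hfamily]
  exact complete_of_image_eq_spread hs
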